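/- arXiv:0805.4000 — 6 statements merged into one kernel-verified Lean document; each statement's English description precedes it below -/
import Mathlib

section
/- Let A and B be nilpotent groups of class at most 2 and let G = (A*B)/[[A*B,A*B],A*B] be their 2-nilpotent product. Then the canonical maps A → G and B → G are injective. -/
/-- The 2-nilpotent product of `A` and `B`: the free product modulo the third
term of its lower central series. -/
abbrev nilProd2 (A B : Type) [Group A] [Group B] : Type :=
  Monoid.Coprod A B ⧸ (⊤ : Subgroup (Monoid.Coprod A B)).lowerCentralSeries 2

/-- Canonical map `A → A ∐² B`. -/
def nilProd2.inl (A B : Type) [Group A] [Group B] : A →* nilProd2 A B :=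
  (QuotientGroup.mk' _).comp Monoid.Coprod.inl

/-- Canonical map `B → A ∐² B`. -/
def nilProd2.inr (A B : Type) [Group A] [Group B] : B →* nilProd2 A B :=
  (QuotientGroup.mk' _).comp Monoid.Coprod.inr

/-- The (normal, indeed central) subgroup of the 2-nilpotent product generated by
`{ h φ(h)⁻¹ : h ∈ H }`. -/
def amalgamRel (A B : Type) [Group A] [Group B] (H : Subgroup A) (K : Subgroup B)
    (φ : H ≃* K) : Subgroup (nilProd2 A B) :=
  Subgroup.normalClosure
    {x | ∃ h : H, x = nilProd2.inl A B h * (nilProd2.inr A B (φ h))⁻¹}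

instance (A B : Type) [Group A] [Group B] (H : Subgroup A) (K : Subgroup B)
    (φ : H ≃* K) : (amalgamRel A B H K φ).Normal :=
  Subgroup.normalClosure_normal

/-- The amalgamated coproduct `A ∐²_φ B`. -/
abbrev amalgam (A B : Type) [Group A] [Group B] (H : Subgroup A) (K : Subgroup B)
    (φ : H ≃* K) : Type :=
  nilProd2 A B ⧸ amalgamRel A B H K φ

/-- Canonical map `A → A ∐²_φ B`. -/
def amalgam.inl (A B : Type) [Group A] [Group B] (H : Subgroup A) (K : Subgroup B)
    (φ : H ≃* K) : A →* amalgam A B H K φ :=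
  (QuotientGroup.mk' _).comp (nilProd2.inl A B)

/-- Canonical map `B → A ∐²_φ B`. -/
def amalgam.inr (A B : Type) [Group A] [Group B] (H : Subgroup A) (K : Subgroup B)
    (φ : H ≃* K) : B →* amalgam A B H K φ :=
  (QuotientGroup.mk' _).comp (nilProd2.inr A B)

/-- A group is capable if it is a central factor group. -/
def IsCapable (G : Type) [Group G] : Prop :=
  ∃ (E : Type) (_ : Group E), Nonempty ((E ⧸ Subgroup.center E) ≃* G)

/-- The epicentre of `G`: the intersection of the images of the centers over
all central extensions of `G`. -/
def epicenter (G : Type) [Group G] : Subgroup G :=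
  ⨅ (E : Type) (_ : Group E) (ψ : E →* G) (_ : Function.Surjective ψ)
    (_ : ψ.ker ≤ Subgroup.center E), Subgroup.map ψ (Subgroup.center E)

instance (G : Type) [Group G] [Group.FG G] : Group.FG (Abelianization G) :=
  Group.fg_of_surjective (f := Abelianization.of)
    (fun x => Quotient.inductionOn' x (fun g => ⟨g, rfl⟩))

/-! A retraction of `A ∗ B` onto `A` (resp. `B`) lands in a group of class at most 2, so it
kills the third term of the lower central series and descends to the 2-nilpotent product,
where it is still a left inverse of the canonical map. -/

theorem Subgroup.lowerCentralSeries_le_ker {G C : Type*} [Group G] [Group C] (f : G →* C)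
    {n : ℕ} (hC : (⊤ : Subgroup C).lowerCentralSeries n = ⊥) :
    (⊤ : Subgroup G).lowerCentralSeries n ≤ f.ker := by
  rw [← Subgroup.map_eq_bot_iff, eq_bot_iff, ← hC, Subgroup.map_lowerCentralSeries]
  exact Subgroup.lowerCentralSeries_mono n le_top

theorem QuotientGroup.injective_mk'_lowerCentralSeries_comp {G C : Type*} [Group G] [Group C]
    (ι : C →* G) (f : G →* C) (hf : Function.LeftInverse f ι) {n : ℕ}
    (hC : (⊤ : Subgroup C).lowerCentralSeries n = ⊥) :
    Function.Injective ((mk' ((⊤ : Subgroup G).lowerCentralSeries n)).comp ι) :=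
  Function.LeftInverse.injective (g := lift _ f (Subgroup.lowerCentralSeries_le_ker f hC))
    hf

/-- the canonical maps into the 2-nilpotent product are injective. -/
theorem stmt_1 (A B : Type) [Group A] [Group B]
    (hA : (⊤ : Subgroup A).lowerCentralSeries 2 = ⊥) (hB : (⊤ : Subgroup B).lowerCentralSeries 2 = ⊥) :
    Function.Injective (nilProd2.inl A B) ∧ Function.Injective (nilProd2.inr A B) :=
  ⟨QuotientGroup.injective_mk'_lowerCentralSeries_comp (G := Monoid.Coprod A B)
      Monoid.Coprod.inl Monoid.Coprod.fst Monoid.Coprod.fst_apply_inl hA,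
    QuotientGroup.injective_mk'_lowerCentralSeries_comp (G := Monoid.Coprod A B)
      Monoid.Coprod.inr Monoid.Coprod.snd Monoid.Coprod.snd_apply_inr hB⟩
end

section
/- Let A and B be nilpotent groups of class at most 2 and let G be their 2-nilpotent product. Then every element of G can be written uniquely in the form αβγ with α in (the image of) A, β in (the image of) B, and γ in the commutator subgroup [B,A] ≤ G generated by commutators of elements of B with elements of A. -/
/-! In a group of class at most 2 commutators are central, so moving a letter of `B` to the left
past a letter of `A` only leaves behind a central commutator lying in `[B,A]`; this gives the
normal form. For uniqueness, the pairs `(id, 1)` and `(1, id)` induce retractions of `G` onto `A`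
and onto `B` (here the class of `A` and of `B` is used); both kill `[B,A]`, so they read off `α`
and `β`, and then `γ` is determined. -/

open scoped commutatorElement

section LowerCentralSeries

variable {G : Type*} [Group G]

theorem commute_commutatorElement_of_lowerCentralSeries_two_eq_bot
    (hG : (⊤ : Subgroup G).lowerCentralSeries 2 = ⊥) (x y g : G) : Commute ⁅x, y⁆ g := by
  have hmem : ⁅⁅x, y⁆, g⁆ ∈ (⊤ : Subgroup G).lowerCentralSeries 2 :=
    Subgroup.commutator_mem_commutator
      (Subgroup.commutator_mem_commutator (Subgroup.mem_top x) (Subgroup.mem_top y))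
      (Subgroup.mem_top g)
  rw [hG, Subgroup.mem_bot] at hmem
  exact commutatorElement_eq_one_iff_commute.mp hmem

theorem QuotientGroup.lowerCentralSeries_quotient_lowerCentralSeries (n : ℕ) :
    (⊤ : Subgroup (G ⧸ (⊤ : Subgroup G).lowerCentralSeries n)).lowerCentralSeries n = ⊥ := by
  set N := (⊤ : Subgroup G).lowerCentralSeries n
  rw [← Subgroup.map_top_of_surjective _ (QuotientGroup.mk'_surjective N),
    ← Subgroup.map_lowerCentralSeries, Subgroup.map_eq_bot_iff, QuotientGroup.ker_mk']

end LowerCentralSeries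

namespace nilProd2

variable {A B : Type} [Group A] [Group B]

theorem lowerCentralSeries_two_eq_bot :
    (⊤ : Subgroup (nilProd2 A B)).lowerCentralSeries 2 = ⊥ :=
  QuotientGroup.lowerCentralSeries_quotient_lowerCentralSeries 2

theorem commute_commutatorElement (x y g : nilProd2 A B) : Commute ⁅x, y⁆ g :=
  commute_commutatorElement_of_lowerCentralSeries_two_eq_bot lowerCentralSeries_two_eq_bot x y g

section Lift

variable {G : Type*} [Group G] (hG : (⊤ : Subgroup G).lowerCentralSeries 2 = ⊥)
  (f : A →* G) (g : B →* G)

def lift : nilProd2 A B →* G :=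
  QuotientGroup.lift _ (Monoid.Coprod.lift f g) <| by
    rw [← Subgroup.map_eq_bot_iff, Subgroup.map_lowerCentralSeries, ← le_bot_iff, ← hG]
    exact Subgroup.lowerCentralSeries_mono 2 le_top

@[simp]
theorem lift_inl (a : A) : lift hG f g (inl A B a) = f a :=
  Monoid.Coprod.lift_apply_inl f g a

@[simp]
theorem lift_inr (b : B) : lift hG f g (inr A B b) = g b :=
  Monoid.Coprod.lift_apply_inr f g b

theorem lift_eq_one_of_mem_commutator (hfg : ∀ a b, Commute (f a) (g b)) {c : nilProd2 A B}
    (hc : c ∈ ⁅(inr A B).range, (inl A B).range⁆) : lift hG f g c = 1 := by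
  refine (Subgroup.commutator_le (H₃ := (lift hG f g).ker)).mpr ?_ hc
  rintro _ ⟨b, rfl⟩ _ ⟨a, rfl⟩
  rw [MonoidHom.mem_ker, map_commutatorElement, lift_inl, lift_inr,
    commutatorElement_eq_one_iff_commute]
  exact (hfg a b).symm

theorem lift_inl_mul_inr_mul (hfg : ∀ a b, Commute (f a) (g b)) (a : A) (b : B)
    {c : nilProd2 A B} (hc : c ∈ ⁅(inr A B).range, (inl A B).range⁆) :
    lift hG f g (inl A B a * inr A B b * c) = f a * g b := by
  rw [map_mul, map_mul, lift_inl, lift_inr, lift_eq_one_of_mem_commutator hG f g hfg hc, mul_one]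

end Lift

theorem exists_eq_inl_mul_inr_mul (x : nilProd2 A B) :
    ∃ a b, ∃ c ∈ ⁅(inr A B).range, (inl A B).range⁆, x = inl A B a * inr A B b * c := by
  obtain ⟨w, rfl⟩ := QuotientGroup.mk'_surjective _ x
  induction w using Monoid.Coprod.induction_on' with
  | one => exact ⟨1, 1, 1, one_mem _, by simp only [map_one, mul_one]⟩
  | inl_mul a' w ih =>
    obtain ⟨a, b, c, hc, hw⟩ := ih
    refine ⟨a' * a, b, c, hc, ?_⟩
    rw [map_mul, hw, map_mul, ← mul_assoc, ← mul_assoc]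
    rfl
  | inr_mul b' w ih =>
    obtain ⟨a, b, c, hc, hw⟩ := ih
    refine ⟨a, b' * b, ⁅inr A B b', inl A B a⁆ * c,
      mul_mem (Subgroup.commutator_mem_commutator ⟨b', rfl⟩ ⟨a, rfl⟩) hc, ?_⟩
    rw [map_mul, hw, map_mul]
    set x := inl A B a
    set y := inr A B b'
    calc y * (x * inr A B b * c) = ⁅y, x⁆ * (x * (y * inr A B b) * c) := by
          rw [commutatorElement_def]; group
      _ = x * (y * inr A B b) * (⁅y, x⁆ * c) := by
          rw [← mul_assoc, (commute_commutatorElement y x _).eq, mul_assoc]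

theorem eq_of_inl_mul_inr_mul_eq (hA : (⊤ : Subgroup A).lowerCentralSeries 2 = ⊥)
    (hB : (⊤ : Subgroup B).lowerCentralSeries 2 = ⊥) {a a' : A} {b b' : B} {c c' : nilProd2 A B}
    (hc : c ∈ ⁅(inr A B).range, (inl A B).range⁆) (hc' : c' ∈ ⁅(inr A B).range, (inl A B).range⁆)
    (h : inl A B a * inr A B b * c = inl A B a' * inr A B b' * c') :
    a = a' ∧ b = b' ∧ c = c' := by
  have ha : a = a' := by
    simpa [lift_inl_mul_inr_mul, hc, hc'] using congrArg (lift hA (.id A) 1) h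
  have hb : b = b' := by
    simpa [lift_inl_mul_inr_mul, hc, hc'] using congrArg (lift hB 1 (.id B)) h
  subst ha hb
  exact ⟨rfl, rfl, mul_left_cancel h⟩

end nilProd2

/-- unique normal form `α β γ` in the 2-nilpotent product, with
`α ∈ A`, `β ∈ B` and `γ ∈ [B,A]`. -/
theorem stmt_3 (A B : Type) [Group A] [Group B]
    (hA : (⊤ : Subgroup A).lowerCentralSeries 2 = ⊥) (hB : (⊤ : Subgroup B).lowerCentralSeries 2 = ⊥) :
    ∀ g : nilProd2 A B,
      ∃! t : A × B ×
          ↥(⁅(nilProd2.inr A B).range, (nilProd2.inl A B).range⁆ : Subgroup (nilProd2 A B)),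
        g = nilProd2.inl A B t.1 * nilProd2.inr A B t.2.1 * (t.2.2 : nilProd2 A B) := by
  intro g
  obtain ⟨a, b, c, hc, rfl⟩ := nilProd2.exists_eq_inl_mul_inr_mul g
  refine ⟨⟨a, b, ⟨c, hc⟩⟩, rfl, ?_⟩
  rintro ⟨a', b', c', hc'⟩ h
  obtain ⟨rfl, rfl, rfl⟩ := nilProd2.eq_of_inl_mul_inr_mul_eq hA hB hc' hc h.symm
  rfl
end

section
/- Let A and B be nilpotent groups of class at most 2 and let G be their 2-nilpotent product. Multiplication in G in the normal form satisfies (α₁β₁γ₁)(α₂β₂γ₂) = (α₁α₂)(β₁β₂)(γ₁γ₂[β₁,α₂]), where αᵢ ∈ A, βᵢ ∈ B, γᵢ ∈ [B,A]. -/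
open scoped commutatorElement

theorem Subgroup.map_lowerCentralSeries_top_of_surjective {G H : Type*} [Group G] [Group H]
    {f : G →* H} (hf : Function.Surjective f) (n : ℕ) :
    ((⊤ : Subgroup G).lowerCentralSeries n).map f = (⊤ : Subgroup H).lowerCentralSeries n := by
  induction n with
  | zero => exact Subgroup.map_top_of_surjective f hf
  | succ n ih =>
    rw [Subgroup.lowerCentralSeries_succ, Subgroup.map_commutator, ih,
      Subgroup.map_top_of_surjective f hf, Subgroup.lowerCentralSeries_succ]

theorem commutator_le_center_quotient_lowerCentralSeries_two (G : Type*) [Group G] :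
    commutator (G ⧸ (⊤ : Subgroup G).lowerCentralSeries 2) ≤
      Subgroup.center (G ⧸ (⊤ : Subgroup G).lowerCentralSeries 2) := by
  rw [← Subgroup.commutator_top_right_eq_bot_iff_le_center, ← Subgroup.top_lowerCentralSeries_one,
    ← Subgroup.lowerCentralSeries_succ,
    ← Subgroup.map_lowerCentralSeries_top_of_surjective (QuotientGroup.mk'_surjective _),
    QuotientGroup.map_mk'_self]

theorem normalForm_mul_normalForm_of_mem_center {G : Type*} [Group G] {a₁ a₂ b₁ b₂ γ₁ γ₂ : G}
    (hγ₁ : γ₁ ∈ Subgroup.center G) (hc : ⁅b₁, a₂⁆ ∈ Subgroup.center G) :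
    a₁ * b₁ * γ₁ * (a₂ * b₂ * γ₂) = a₁ * a₂ * (b₁ * b₂) * (γ₁ * γ₂ * ⁅b₁, a₂⁆) := by
  rw [Subgroup.mem_center_iff] at hγ₁ hc
  have hba : b₁ * a₂ = a₂ * b₁ * ⁅b₁, a₂⁆ := by
    rw [hc, commutatorElement_def]; group
  calc a₁ * b₁ * γ₁ * (a₂ * b₂ * γ₂) = a₁ * (b₁ * a₂) * b₂ * (γ₂ * γ₁) := by
        rw [mul_assoc _ γ₁, ← hγ₁]; simp only [mul_assoc]
    _ = a₁ * a₂ * (b₁ * b₂) * (⁅b₁, a₂⁆ * (γ₁ * γ₂)) := by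
        rw [hba, hγ₁ γ₂]; simp only [mul_assoc]; rw [← mul_assoc _ b₂, ← hc b₂, mul_assoc]
    _ = a₁ * a₂ * (b₁ * b₂) * (γ₁ * γ₂ * ⁅b₁, a₂⁆) := by
        rw [hc]

theorem nilProd2.commutator_le_center (A B : Type) [Group A] [Group B] :
    commutator (nilProd2 A B) ≤ Subgroup.center (nilProd2 A B) :=
  commutator_le_center_quotient_lowerCentralSeries_two _

theorem stmt_4_general (A B : Type) [Group A] [Group B]
    (α₁ α₂ : A) (β₁ β₂ : B) (γ₁ γ₂ : nilProd2 A B)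
    (h₁ : γ₁ ∈ (⁅(nilProd2.inr A B).range, (nilProd2.inl A B).range⁆ : Subgroup (nilProd2 A B))) :
    (nilProd2.inl A B α₁ * nilProd2.inr A B β₁ * γ₁) *
      (nilProd2.inl A B α₂ * nilProd2.inr A B β₂ * γ₂) =
    nilProd2.inl A B (α₁ * α₂) * nilProd2.inr A B (β₁ * β₂) *
      (γ₁ * γ₂ * ⁅nilProd2.inr A B β₁, nilProd2.inl A B α₂⁆) := by
  have hcentral := nilProd2.commutator_le_center A B
  rw [map_mul, map_mul]
  exact normalForm_mul_normalForm_of_mem_center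
    (hcentral (Subgroup.commutator_mono le_top le_top h₁))
    (hcentral (Subgroup.commutator_mem_commutator (Subgroup.mem_top _) (Subgroup.mem_top _)))

/-- the multiplication rule for normal forms in the 2-nilpotent
product: `(α₁β₁γ₁)(α₂β₂γ₂) = (α₁α₂)(β₁β₂)(γ₁γ₂[β₁,α₂])`. -/
theorem stmt_4 (A B : Type) [Group A] [Group B]
    (hA : (⊤ : Subgroup A).lowerCentralSeries 2 = ⊥) (hB : (⊤ : Subgroup B).lowerCentralSeries 2 = ⊥)
    (α₁ α₂ : A) (β₁ β₂ : B) (γ₁ γ₂ : nilProd2 A B)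
    (h₁ : γ₁ ∈ (⁅(nilProd2.inr A B).range, (nilProd2.inl A B).range⁆ : Subgroup (nilProd2 A B)))
    (h₂ : γ₂ ∈ (⁅(nilProd2.inr A B).range, (nilProd2.inl A B).range⁆ : Subgroup (nilProd2 A B))) :
    (nilProd2.inl A B α₁ * nilProd2.inr A B β₁ * γ₁) *
      (nilProd2.inl A B α₂ * nilProd2.inr A B β₂ * γ₂) =
    nilProd2.inl A B (α₁ * α₂) * nilProd2.inr A B (β₁ * β₂) *
      (γ₁ * γ₂ * ⁅nilProd2.inr A B β₁, nilProd2.inl A B α₂⁆) :=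
  stmt_4_general A B α₁ α₂ β₁ β₂ γ₁ γ₂ h₁
end

section
/- Let A and B be groups of class at most 2 and odd exponent n, i.e., every element satisfies x^n = 1. Then their 2-nilpotent product G also has exponent dividing n. -/
/-!
In a group of class at most 2 every commutator is central, and induction on `k` gives
`y ^ k * x = ⁅y, x⁆ ^ k * x * y ^ k` and
`(x * y) ^ k = ⁅y, x⁆ ^ (k choose 2) * x ^ k * y ^ k`.
If `x ^ n = y ^ n = 1` with `n` odd, then `⁅y, x⁆ ^ n = 1` and `n` divides `n choose 2`,
so `(x * y) ^ n = 1`. Hence the elements of exponent dividing `n` form a subgroup, and the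
2-nilpotent product, being of class 2 and generated by the images of `A` and `B`, has
exponent dividing `n`.
-/

open scoped commutatorElement

section ClassTwo

variable {G : Type*} [Group G] (hG : ∀ x y z : G, ⁅⁅x, y⁆, z⁆ = 1)
include hG

theorem commute_commutatorElement_of_class_two (x y z : G) : Commute ⁅x, y⁆ z :=
  commutatorElement_eq_one_iff_commute.mp (hG x y z)

theorem pow_mul_eq_commutatorElement_pow_mul (x y : G) (k : ℕ) :
    y ^ k * x = ⁅y, x⁆ ^ k * (x * y ^ k) := by
  induction k with
  | zero => simp
  | succ k ih =>
    have hcomm := (commute_commutatorElement_of_class_two hG y x y).pow_left k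
    calc y ^ (k + 1) * x = y * (y ^ k * x) := by rw [pow_succ', mul_assoc]
      _ = (y * ⁅y, x⁆ ^ k) * (x * y ^ k) := by rw [ih, mul_assoc]
      _ = ⁅y, x⁆ ^ k * (y * x * y⁻¹ * x⁻¹) * (x * y ^ (k + 1)) := by
          rw [← hcomm.eq, pow_succ]; group
      _ = ⁅y, x⁆ ^ (k + 1) * (x * y ^ (k + 1)) := by
          rw [← commutatorElement_def, pow_succ ⁅y, x⁆ k, mul_assoc]

theorem mul_pow_eq_commutatorElement_pow_choose_two_mul (x y : G) (k : ℕ) :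
    (x * y) ^ k = ⁅y, x⁆ ^ k.choose 2 * (x ^ k * y ^ k) := by
  induction k with
  | zero => simp
  | succ k ih =>
    have hcomm := (commute_commutatorElement_of_class_two hG y x (x ^ k)).pow_left k
    have hchoose : (k + 1).choose 2 = k.choose 2 + k := by
      simp [Nat.choose_succ_succ, add_comm]
    calc (x * y) ^ (k + 1) = ⁅y, x⁆ ^ k.choose 2 * (x ^ k * (y ^ k * x) * y) := by
          rw [pow_succ, ih]; simp only [mul_assoc]
      _ = ⁅y, x⁆ ^ k.choose 2 * (x ^ k * ⁅y, x⁆ ^ k) * (x * y ^ (k + 1)) := by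
          rw [pow_mul_eq_commutatorElement_pow_mul hG x y k, pow_succ y]; simp only [mul_assoc]
      _ = ⁅y, x⁆ ^ (k + 1).choose 2 * (x ^ (k + 1) * y ^ (k + 1)) := by
          rw [← hcomm.eq, hchoose, pow_add ⁅y, x⁆, pow_succ x]; simp only [mul_assoc]

theorem commutatorElement_pow_eq_one {x y : G} {n : ℕ} (hy : y ^ n = 1) : ⁅y, x⁆ ^ n = 1 := by
  simpa [hy] using (pow_mul_eq_commutatorElement_pow_mul hG x y n).symm

theorem mul_pow_eq_one_of_odd {n : ℕ} (hn : Odd n) {x y : G} (hx : x ^ n = 1)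
    (hy : y ^ n = 1) : (x * y) ^ n = 1 := by
  obtain ⟨m, rfl⟩ := hn
  have hchoose : (2 * m + 1).choose 2 = (2 * m + 1) * m := by
    rw [Nat.choose_two_right, Nat.add_sub_cancel, mul_left_comm,
      Nat.mul_div_cancel_left _ two_pos]
  rw [mul_pow_eq_commutatorElement_pow_choose_two_mul hG, hx, hy, hchoose, pow_mul,
    commutatorElement_pow_eq_one hG hy, one_pow, one_mul, one_mul]

theorem pow_eq_one_of_closure_eq_top {n : ℕ} (hn : Odd n) {S : Set G}
    (hS : Subgroup.closure S = ⊤) (hSn : ∀ x ∈ S, x ^ n = 1) (g : G) : g ^ n = 1 := by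
  have hg : g ∈ Subgroup.closure S := hS ▸ Subgroup.mem_top g
  induction hg using Subgroup.closure_induction with
  | mem x hx => exact hSn x hx
  | one => exact one_pow n
  | mul x y _ _ hx hy => exact mul_pow_eq_one_of_odd hG hn hx hy
  | inv x _ hx => rw [inv_pow, hx, inv_one]

end ClassTwo

theorem commutatorElement_commutatorElement_mem_lowerCentralSeries_two {G : Type*} [Group G]
    (x y z : G) : ⁅⁅x, y⁆, z⁆ ∈ (⊤ : Subgroup G).lowerCentralSeries 2 := by
  have hxy : ⁅x, y⁆ ∈ (⊤ : Subgroup G).lowerCentralSeries 1 :=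
    Subgroup.commutator_mem_commutator (Subgroup.mem_top x) (Subgroup.mem_top y)
  exact Subgroup.commutator_mem_commutator hxy (Subgroup.mem_top z)

namespace nilProd2

variable (A B : Type) [Group A] [Group B]

theorem commutatorElement_commutatorElement_eq_one (x y z : nilProd2 A B) :
    ⁅⁅x, y⁆, z⁆ = 1 := by
  obtain ⟨x, rfl⟩ := QuotientGroup.mk'_surjective _ x
  obtain ⟨y, rfl⟩ := QuotientGroup.mk'_surjective _ y
  obtain ⟨z, rfl⟩ := QuotientGroup.mk'_surjective _ z
  rw [← map_commutatorElement, ← map_commutatorElement, QuotientGroup.mk'_apply,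
    QuotientGroup.eq_one_iff]
  exact commutatorElement_commutatorElement_mem_lowerCentralSeries_two x y z

theorem closure_range_inl_union_inr :
    Subgroup.closure (Set.range (inl A B) ∪ Set.range (inr A B)) = ⊤ := by
  rw [inl, inr, MonoidHom.coe_comp, MonoidHom.coe_comp, Set.range_comp, Set.range_comp,
    ← Set.image_union, ← MonoidHom.map_closure, Monoid.Coprod.closure_range_inl_union_inr,
    Subgroup.map_top_of_surjective _ (QuotientGroup.mk'_surjective _)]

end nilProd2

theorem stmt_6_general (n : ℕ) (hn : Odd n) (A B : Type) [Group A] [Group B]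
    (hAe : ∀ a : A, a ^ n = 1) (hBe : ∀ b : B, b ^ n = 1) :
    ∀ g : nilProd2 A B, g ^ n = 1 := by
  refine pow_eq_one_of_closure_eq_top (nilProd2.commutatorElement_commutatorElement_eq_one A B)
    hn (nilProd2.closure_range_inl_union_inr A B) ?_
  rintro _ (⟨a, rfl⟩ | ⟨b, rfl⟩)
  · rw [← map_pow, hAe, map_one]
  · rw [← map_pow, hBe, map_one]

/-- if `A` and `B` have class at most 2 and odd exponent `n`, then
their 2-nilpotent product has exponent dividing `n`. -/
theorem stmt_6 (n : ℕ) (hn : Odd n) (A B : Type) [Group A] [Group B]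
    (hA : (⊤ : Subgroup A).lowerCentralSeries 2 = ⊥) (hB : (⊤ : Subgroup B).lowerCentralSeries 2 = ⊥)
    (hAe : ∀ a : A, a ^ n = 1) (hBe : ∀ b : B, b ^ n = 1) :
    ∀ g : nilProd2 A B, g ^ n = 1 :=
  stmt_6_general n hn A B hAe hBe
end

section
/- Let A and B be nontrivial groups of class at most 2 and odd prime exponent p, and let G = A ∐²_φ B be an amalgamated coproduct along an isomorphism φ : H → K with H ≤ [A,A], K ≤ [B,B]. If G = CD with subgroups C, D satisfying [C,D] = 1, then C ⊆ D or D ⊆ C; i.e., G admits no nontrivial central product decomposition. -/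
/-!
`G = A ∐²_φ B` has class two, and since `H` and `K` lie in the derived subgroups, `G → Aᵃᵇ × Bᵃᵇ`
has kernel inside `[G, G]`. A factor of `G = CD` contained in `[G, G]` is central, hence lies in
the other factor. Otherwise pick `u ∈ C` and `v ∈ D` outside `[G, G]`. Characters `f` of `Aᵃᵇ`
and `g` of `Bᵃᵇ` (elementary abelian `p`-groups) give a representation of `G` in the Heisenberg
group over `𝔽_p`, `inl a ↦ (f a, 0, 0)`, `inr b ↦ (0, g b, 0)`, in which two elements commute iff
their `(x, y)`-parts are parallel. Choosing `f, g ≠ 0` nonvanishing on the images of `u` and `v`,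
the image of `v` is noncentral; every element of `C` is parallel to it and every element of `D`
commutes with `u`, so the image of `u` commutes with the whole image of `G`, which forces it to
be central: a contradiction.
-/

open scoped commutatorElement

open Subgroup

section GroupLemmas

variable {G : Type*} [Group G]

theorem lowerCentralSeries_top_le_ker {X : Type*} [Group X] (f : G →* X) {n : ℕ}
    (hX : (⊤ : Subgroup X).lowerCentralSeries n = ⊥) :
    (⊤ : Subgroup G).lowerCentralSeries n ≤ f.ker := by
  rw [← Subgroup.map_eq_bot_iff, map_lowerCentralSeries, ← le_bot_iff, ← hX]
  exact lowerCentralSeries_mono n le_top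

theorem lowerCentralSeries_top_two_eq_bot_iff :
    (⊤ : Subgroup G).lowerCentralSeries 2 = ⊥ ↔ commutator G ≤ center G := by
  rw [Subgroup.lowerCentralSeries_succ, top_lowerCentralSeries_one,
    commutator_top_right_eq_bot_iff_le_center]

theorem CommGroup.lowerCentralSeries_top_two_eq_bot {G : Type*} [CommGroup G] :
    (⊤ : Subgroup G).lowerCentralSeries 2 = ⊥ :=
  lowerCentralSeries_top_two_eq_bot_iff.mpr (by rw [CommGroup.center_eq_top]; exact le_top)

theorem Subgroup.normal_of_sup_eq_top_of_commutator_eq_bot {C D : Subgroup G}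
    (hsup : C ⊔ D = ⊤) (hcomm : ⁅C, D⁆ = ⊥) : D.Normal := by
  rw [← normalizer_eq_top_iff, eq_top_iff, ← hsup]
  refine sup_le ?_ le_normalizer
  rw [le_normalizer_iff_commutator_le_right, hcomm]
  exact bot_le

theorem commutatorElement_mul_left_of_mem_center {z : G} (hz : z ∈ center G) (g h : G) :
    ⁅z * g, h⁆ = ⁅g, h⁆ := by
  rw [commutatorElement_mul_left_eq_conj_mul,
    commutatorElement_eq_one_iff_mul_comm.mpr (mem_center_iff.mp hz h).symm, mul_one,
    (mem_center_iff.mp hz _).symm, mul_inv_cancel_right]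

theorem commutatorElement_mul_right_of_mem_center {z : G} (hz : z ∈ center G) (g h : G) :
    ⁅g, z * h⁆ = ⁅g, h⁆ := by
  rw [← commutatorElement_inv, commutatorElement_mul_left_of_mem_center hz,
    commutatorElement_inv]

/-- `C` is central, so the other factor `D` already contains every commutator. -/
theorem le_of_sup_eq_top_of_le_commutator (hG : commutator G ≤ center G) {C D : Subgroup G}
    (hsup : C ⊔ D = ⊤) (hC : C ≤ commutator G) : C ≤ D := by
  have hCZ : C ≤ center G := hC.trans hG
  have : D.Normal := normal_of_sup_eq_top_of_commutator_eq_bot hsup <| by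
    rw [← le_bot_iff, ← commutator_top_right_eq_bot_iff_le_center.mpr hCZ]
    exact commutator_mono le_rfl le_top
  refine hC.trans ?_
  rw [commutator_def, commutator_le]
  intro g₁ _ g₂ _
  obtain ⟨c₁, hc₁, d₁, hd₁, rfl⟩ := mem_sup_of_normal_right.mp (hsup ▸ mem_top g₁)
  obtain ⟨c₂, hc₂, d₂, hd₂, rfl⟩ := mem_sup_of_normal_right.mp (hsup ▸ mem_top g₂)
  rw [commutatorElement_mul_left_of_mem_center (hCZ hc₁),
    commutatorElement_mul_right_of_mem_center (hCZ hc₂)]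
  exact commutator_mem_commutator hd₁ hd₂ |> commutator_le_right D D

theorem Abelianization.nontrivial_of_lowerCentralSeries_eq_bot [Nontrivial G] {n : ℕ}
    (h : (⊤ : Subgroup G).lowerCentralSeries n = ⊥) : Nontrivial (Abelianization G) := by
  have : Group.IsNilpotent G := Subgroup.nilpotent_iff_lowerCentralSeries.mpr ⟨n, h⟩
  obtain ⟨g, -, hg⟩ := SetLike.exists_of_lt (Group.IsSolvable.commutator_lt_top_of_nontrivial G)
  exact ⟨⟨of g, 1, by rwa [Ne, ← MonoidHom.mem_ker, ker_of]⟩⟩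

theorem Abelianization.of_eq_one {g : G} (hg : g ∈ commutator G) : of g = 1 := by
  rwa [← MonoidHom.mem_ker, ker_of]

theorem Abelianization.exists_apply_of_ne_one {M : Type*} [Group M]
    {f : Abelianization G →* M} (hf : f ≠ 1) : ∃ g, f (of g) ≠ 1 := by
  by_contra! h
  exact hf (hom_ext _ _ (MonoidHom.ext h))

theorem Abelianization.pow_eq_one {n : ℕ} (h : ∀ g : G, g ^ n = 1) (x : Abelianization G) :
    x ^ n = 1 :=
  QuotientGroup.induction_on x fun g => by
    change of g ^ n = 1
    rw [← map_pow, h, map_one]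

end GroupLemmas

section Characters

theorem Module.exists_dual_apply_ne_zero_and_apply_ne_zero {k V : Type*} [Field k]
    [AddCommGroup V] [Module k V] {a b : V} (ha : a ≠ 0) (hb : b ≠ 0) :
    ∃ f : Module.Dual k V, f a ≠ 0 ∧ f b ≠ 0 := by
  obtain ⟨f₁, hf₁⟩ : ∃ f : Module.Dual k V, f a ≠ 0 := by
    by_contra! h; exact ha ((Module.forall_dual_apply_eq_zero_iff k a).mp h)
  obtain ⟨f₂, hf₂⟩ : ∃ f : Module.Dual k V, f b ≠ 0 := by
    by_contra! h; exact hb ((Module.forall_dual_apply_eq_zero_iff k b).mp h)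
  by_cases h₁ : f₁ b = 0
  · by_cases h₂ : f₂ a = 0
    · exact ⟨f₁ + f₂, by simpa [h₂] using hf₁, by simpa [h₁] using hf₂⟩
    · exact ⟨f₂, h₂, hf₂⟩
  · exact ⟨f₁, hf₁, h₁⟩

/-- Characters of an elementary abelian `p`-group are its `ZMod p`-linear functionals. -/
theorem exists_monoidHom_zmod_ne_one {p : ℕ} [Fact p.Prime] {M : Type*} [CommGroup M]
    [Nontrivial M] (hM : ∀ m : M, m ^ p = 1) (a b : M) :
    ∃ f : M →* Multiplicative (ZMod p), f ≠ 1 ∧ (a ≠ 1 → f a ≠ 1) ∧ (b ≠ 1 → f b ≠ 1) := by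
  let _ : Module (ZMod p) (Additive M) :=
    AddCommGroup.zmodModule fun m => congrArg Additive.ofMul (hM m.toMul)
  classical
  -- replacing a trivial `a` or `b` by some `e ≠ 1` also forces `f ≠ 1`
  obtain ⟨e, he⟩ := exists_ne (1 : M)
  set a' := if a = 1 then e else a
  set b' := if b = 1 then e else b
  have ha' : a' ≠ 1 := by unfold a'; split_ifs <;> assumption
  have hb' : b' ≠ 1 := by unfold b'; split_ifs <;> assumption
  obtain ⟨F, hFa, hFb⟩ := Module.exists_dual_apply_ne_zero_and_apply_ne_zero
    (V := Additive M) (k := ZMod p) (a := .ofMul a') (b := .ofMul b') ha' hb'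
  refine ⟨AddMonoidHom.toMultiplicativeRight F.toAddMonoidHom,
    fun h => hFa (congrArg Multiplicative.toAdd (DFunLike.congr_fun h a')), fun ha => ?_,
    fun hb => ?_⟩
  · simpa [a', ha] using hFa
  · simpa [b', hb] using hFb

theorem exists_prodMap_zmod_ne_one {p : ℕ} [Fact p.Prime] {U W : Type*} [CommGroup U]
    [CommGroup W] [Nontrivial U] [Nontrivial W] (hU : ∀ u : U, u ^ p = 1)
    (hW : ∀ w : W, w ^ p = 1) {s t : U × W} (hs : s ≠ 1) (ht : t ≠ 1) :
    ∃ (f : U →* Multiplicative (ZMod p)) (g : W →* Multiplicative (ZMod p)),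
      f ≠ 1 ∧ g ≠ 1 ∧ f.prodMap g s ≠ 1 ∧ f.prodMap g t ≠ 1 := by
  obtain ⟨f, hf, hfs, hft⟩ := exists_monoidHom_zmod_ne_one hU s.1 t.1
  obtain ⟨g, hg, hgs, hgt⟩ := exists_monoidHom_zmod_ne_one hW s.2 t.2
  have prodMap_ne_one {x : U × W} (hx : x ≠ 1) (h₁ : x.1 ≠ 1 → f x.1 ≠ 1)
      (h₂ : x.2 ≠ 1 → g x.2 ≠ 1) : f.prodMap g x ≠ 1 := by
    rw [Ne, Prod.ext_iff, not_and_or] at hx ⊢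
    exact hx.imp h₁ h₂
  exact ⟨f, g, hf, hg, prodMap_ne_one hs hfs hgs, prodMap_ne_one ht hft hgt⟩

end Characters

/-- The Heisenberg group of upper unitriangular `3 × 3` matrices over `R`, with entries
`x`, `y` above the diagonal and `z` in the corner. -/
@[ext]
structure Heis (R : Type*) [CommRing R] where
  x : R
  y : R
  z : R

namespace Heis

variable {R : Type*} [CommRing R]

instance : Mul (Heis R) := ⟨fun a b => ⟨a.x + b.x, a.y + b.y, a.z + b.z + a.x * b.y⟩⟩
instance : One (Heis R) := ⟨⟨0, 0, 0⟩⟩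
instance : Inv (Heis R) := ⟨fun a => ⟨-a.x, -a.y, -a.z + a.x * a.y⟩⟩

@[simp] lemma mul_x (a b : Heis R) : (a * b).x = a.x + b.x := rfl
@[simp] lemma mul_y (a b : Heis R) : (a * b).y = a.y + b.y := rfl
@[simp] lemma mul_z (a b : Heis R) : (a * b).z = a.z + b.z + a.x * b.y := rfl
@[simp] lemma one_x : (1 : Heis R).x = 0 := rfl
@[simp] lemma one_y : (1 : Heis R).y = 0 := rfl
@[simp] lemma one_z : (1 : Heis R).z = 0 := rfl
@[simp] lemma inv_x (a : Heis R) : a⁻¹.x = -a.x := rfl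
@[simp] lemma inv_y (a : Heis R) : a⁻¹.y = -a.y := rfl
@[simp] lemma inv_z (a : Heis R) : a⁻¹.z = -a.z + a.x * a.y := rfl

instance : Group (Heis R) where
  mul_assoc a b c := by ext <;> simp <;> ring
  one_mul a := by ext <;> simp
  mul_one a := by ext <;> simp
  inv_mul_cancel a := by ext <;> simp

theorem commute_iff {a b : Heis R} : Commute a b ↔ a.x * b.y = b.x * a.y := by
  simp only [Commute, SemiconjBy, Heis.ext_iff, mul_x, mul_y, mul_z]
  constructor
  · rintro ⟨-, -, h⟩; linear_combination h
  · intro h; refine ⟨add_comm _ _, add_comm _ _, ?_⟩; linear_combination h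

theorem lowerCentralSeries_two_eq_bot : (⊤ : Subgroup (Heis R)).lowerCentralSeries 2 = ⊥ := by
  rw [lowerCentralSeries_top_two_eq_bot_iff, commutator_def, Subgroup.commutator_le]
  intro a _ b _
  rw [Subgroup.mem_center_iff]
  intro c
  simp only [commutatorElement_def, Heis.ext_iff, mul_x, mul_y, mul_z, inv_x, inv_y, inv_z]
  refine ⟨by ring, by ring, by ring⟩

def mkX : Multiplicative R →* Heis R where
  toFun r := ⟨r.toAdd, 0, 0⟩
  map_one' := rfl
  map_mul' a b := by ext <;> simp

def mkY : Multiplicative R →* Heis R where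
  toFun r := ⟨0, r.toAdd, 0⟩
  map_one' := rfl
  map_mul' a b := by ext <;> simp

def xyHom : Heis R →* Multiplicative R × Multiplicative R where
  toFun a := (.ofAdd a.x, .ofAdd a.y)
  map_one' := rfl
  map_mul' _ _ := rfl

@[simp] lemma mkX_apply (r : Multiplicative R) : mkX r = ⟨r.toAdd, 0, 0⟩ := rfl
@[simp] lemma mkY_apply (r : Multiplicative R) : mkY r = ⟨0, r.toAdd, 0⟩ := rfl
@[simp] lemma xyHom_apply (a : Heis R) : xyHom a = (.ofAdd a.x, .ofAdd a.y) := rfl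

variable {k : Type*} [Field k]

/-- The commutator `⁅a, b⁆` is `(0, 0, det (a.xy, b.xy))`, and two vectors of `k²` that are
both parallel to a nonzero vector are parallel. -/
theorem commute_of_commute_of_commute {a b c : Heis k} (hc : xyHom c ≠ 1)
    (ha : Commute a c) (hb : Commute b c) : Commute a b := by
  rw [commute_iff] at *
  have hcx : (a.x * b.y - b.x * a.y) * c.x = 0 := by linear_combination b.x * ha - a.x * hb
  have hcy : (a.x * b.y - b.x * a.y) * c.y = 0 := by linear_combination b.y * ha - a.y * hb
  by_cases hx : c.x = 0
  · have hy : c.y ≠ 0 := fun hy => hc (by simp [hx, hy])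
    linear_combination (mul_eq_zero.mp hcy).resolve_right hy
  · linear_combination (mul_eq_zero.mp hcx).resolve_right hx

theorem xyHom_eq_one_of_commute {r s : Multiplicative k} {c : Heis k} (hr : r ≠ 1) (hs : s ≠ 1)
    (hrc : Commute (mkX r) c) (hsc : Commute (mkY s) c) : xyHom c = 1 := by
  simp only [commute_iff, mkX_apply, mkY_apply, zero_mul, mul_zero] at hrc hsc
  have hr' : r.toAdd ≠ 0 := hr
  have hs' : s.toAdd ≠ 0 := hs
  simp only [xyHom_apply, Prod.mk_eq_one, ofAdd_eq_one]
  exact ⟨(mul_eq_zero.mp hsc.symm).resolve_right hs', (mul_eq_zero.mp hrc).resolve_left hr'⟩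

theorem commute_map_of_commutator_eq_bot {G : Type*} [Group G]
    {C D : Subgroup G} (hsup : C ⊔ D = ⊤) (hcomm : ⁅C, D⁆ = ⊥) (Ψ : G →* Heis k) {u v : G}
    (hu : u ∈ C) (hv : v ∈ D) (hΨv : xyHom (Ψ v) ≠ 1) (g : G) : Commute (Ψ g) (Ψ u) := by
  have hCD : ∀ c ∈ C, ∀ d ∈ D, Commute (Ψ c) (Ψ d) := fun c hc d hd => by
    have := commutator_mem_commutator hc hd
    rw [hcomm, mem_bot, commutatorElement_eq_one_iff_commute] at this
    exact this.map Ψ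
  have : D.Normal := normal_of_sup_eq_top_of_commutator_eq_bot hsup hcomm
  obtain ⟨c, hc, d, hd, rfl⟩ := mem_sup_of_normal_right.mp (hsup ▸ mem_top g)
  rw [map_mul]
  exact (commute_of_commute_of_commute hΨv (hCD c hc v hv) (hCD u hu v hv)).mul_left
    (hCD u hu d hd).symm

end Heis

namespace amalgam

variable {A B : Type} [Group A] [Group B] {H : Subgroup A} {K : Subgroup B} {φ : H ≃* K}

theorem hom_ext {X : Type*} [Group X] {ψ₁ ψ₂ : amalgam A B H K φ →* X}
    (h₁ : ψ₁.comp (amalgam.inl A B H K φ) = ψ₂.comp (amalgam.inl A B H K φ))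
    (h₂ : ψ₁.comp (amalgam.inr A B H K φ) = ψ₂.comp (amalgam.inr A B H K φ)) : ψ₁ = ψ₂ :=
  QuotientGroup.monoidHom_ext _ <| QuotientGroup.monoidHom_ext _ <| Monoid.Coprod.hom_ext h₁ h₂

def lift {X : Type*} [Group X] (hX : (⊤ : Subgroup X).lowerCentralSeries 2 = ⊥)
    (fA : A →* X) (fB : B →* X) (hf : ∀ h : H, fA h = fB (φ h)) : amalgam A B H K φ →* X :=
  QuotientGroup.lift _
    (QuotientGroup.lift _ (Monoid.Coprod.lift fA fB) (lowerCentralSeries_top_le_ker _ hX)) <|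
    normalClosure_le_normal <| by
      rintro _ ⟨h, rfl⟩
      rw [SetLike.mem_coe, MonoidHom.mem_ker, map_mul, map_inv, mul_inv_eq_one]
      exact (Monoid.Coprod.lift_apply_inl fA fB h).trans
        ((hf h).trans (Monoid.Coprod.lift_apply_inr fA fB _).symm)

section lift

variable {X : Type*} [Group X] (hX : (⊤ : Subgroup X).lowerCentralSeries 2 = ⊥)
  (fA : A →* X) (fB : B →* X) (hf : ∀ h : H, fA h = fB (φ h))

@[simp] theorem lift_inl (a : A) : lift hX fA fB hf (amalgam.inl A B H K φ a) = fA a :=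
  Monoid.Coprod.lift_apply_inl fA fB a

@[simp] theorem lift_inr (b : B) : lift hX fA fB hf (amalgam.inr A B H K φ b) = fB b :=
  Monoid.Coprod.lift_apply_inr fA fB b

end lift

theorem lowerCentralSeries_two_eq_bot :
    (⊤ : Subgroup (amalgam A B H K φ)).lowerCentralSeries 2 = ⊥ := by
  set ψ := (QuotientGroup.mk' (amalgamRel A B H K φ)).comp
    (QuotientGroup.mk' ((⊤ : Subgroup (Monoid.Coprod A B)).lowerCentralSeries 2))
  have hψ : Function.Surjective ψ :=
    (QuotientGroup.mk'_surjective _).comp (QuotientGroup.mk'_surjective _)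
  rw [← map_top_of_surjective ψ hψ, ← map_lowerCentralSeries, Subgroup.map_eq_bot_iff]
  intro g hg
  rw [MonoidHom.mem_ker, MonoidHom.comp_apply,
    show QuotientGroup.mk' _ g = 1 from (QuotientGroup.eq_one_iff g).mpr hg, map_one]

section DerivedSubgroups

variable (hH : H ≤ commutator A) (hK : K ≤ commutator B)

def toAbelianizationProd : amalgam A B H K φ →* Abelianization A × Abelianization B :=
  lift CommGroup.lowerCentralSeries_top_two_eq_bot (.prod Abelianization.of 1)
    (.prod 1 Abelianization.of) fun h => by
      simp [Abelianization.of_eq_one (hH h.2), Abelianization.of_eq_one (hK (φ h).2)]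

include hH hK in
theorem mem_commutator_of_toAbelianizationProd_eq_one {g : amalgam A B H K φ}
    (hg : toAbelianizationProd hH hK g = 1) : g ∈ commutator (amalgam A B H K φ) := by
  let s := (Abelianization.map (amalgam.inl A B H K φ)).coprod
    (Abelianization.map (amalgam.inr A B H K φ))
  have hs : s.comp (toAbelianizationProd hH hK) = Abelianization.of := by
    apply hom_ext <;> ext <;> simp [s, toAbelianizationProd]
  rw [← Abelianization.ker_of, MonoidHom.mem_ker, ← hs, MonoidHom.comp_apply, hg, map_one]

theorem exists_mem_toAbelianizationProd_ne_one {C D : Subgroup (amalgam A B H K φ)}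
    (hsup : C ⊔ D = ⊤) (hCD : ¬C ≤ D) : ∃ u ∈ C, toAbelianizationProd hH hK u ≠ 1 := by
  by_contra! h
  refine hCD (le_of_sup_eq_top_of_le_commutator ?_ hsup fun u hu =>
    mem_commutator_of_toAbelianizationProd_eq_one hH hK (h u hu))
  exact lowerCentralSeries_top_two_eq_bot_iff.mp lowerCentralSeries_two_eq_bot

variable {k : Type*} [Field k]
  (f : Abelianization A →* Multiplicative k) (g : Abelianization B →* Multiplicative k)

def toHeis : amalgam A B H K φ →* Heis k :=
  lift Heis.lowerCentralSeries_two_eq_bot (Heis.mkX.comp (f.comp Abelianization.of))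
    (Heis.mkY.comp (g.comp Abelianization.of)) fun h => by
      simp [Abelianization.of_eq_one (hH h.2), Abelianization.of_eq_one (hK (φ h).2)]

@[simp] theorem toHeis_inl (a : A) :
    toHeis hH hK f g (amalgam.inl A B H K φ a) = Heis.mkX (f (Abelianization.of a)) :=
  lift_inl ..

@[simp] theorem toHeis_inr (b : B) :
    toHeis hH hK f g (amalgam.inr A B H K φ b) = Heis.mkY (g (Abelianization.of b)) :=
  lift_inr ..

theorem xyHom_comp_toHeis :
    Heis.xyHom.comp (toHeis (φ := φ) hH hK f g) =
      (f.prodMap g).comp (toAbelianizationProd hH hK) := by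
  apply hom_ext <;> ext <;> simp [toAbelianizationProd]

end DerivedSubgroups

end amalgam

theorem stmt_10_general (p : ℕ) (hp : p.Prime)
    (A B : Type) [Group A] [Group B] [Nontrivial A] [Nontrivial B]
    (hA : (⊤ : Subgroup A).lowerCentralSeries 2 = ⊥) (hB : (⊤ : Subgroup B).lowerCentralSeries 2 = ⊥)
    (hAe : ∀ a : A, a ^ p = 1) (hBe : ∀ b : B, b ^ p = 1)
    (H : Subgroup A) (K : Subgroup B)
    (hH : H ≤ commutator A) (hK : K ≤ commutator B) (φ : H ≃* K) :
    ∀ C D : Subgroup (amalgam A B H K φ),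
      C ⊔ D = ⊤ → ⁅C, D⁆ = ⊥ → C ≤ D ∨ D ≤ C := by
  intro C D hsup hcomm
  by_contra! hCD
  have : Fact p.Prime := ⟨hp⟩
  have := Abelianization.nontrivial_of_lowerCentralSeries_eq_bot hA
  have := Abelianization.nontrivial_of_lowerCentralSeries_eq_bot hB
  obtain ⟨u, hu, hπu⟩ := amalgam.exists_mem_toAbelianizationProd_ne_one hH hK hsup hCD.1
  obtain ⟨v, hv, hπv⟩ :=
    amalgam.exists_mem_toAbelianizationProd_ne_one hH hK (sup_comm C D ▸ hsup) hCD.2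
  obtain ⟨f, g, hf, hg, hfgu, hfgv⟩ := exists_prodMap_zmod_ne_one
    (Abelianization.pow_eq_one hAe) (Abelianization.pow_eq_one hBe) hπu hπv
  set Ψ : amalgam A B H K φ →* Heis (ZMod p) := amalgam.toHeis hH hK f g
  have hΨ (w : amalgam A B H K φ) :
      Heis.xyHom (Ψ w) = f.prodMap g (amalgam.toAbelianizationProd hH hK w) :=
    DFunLike.congr_fun (amalgam.xyHom_comp_toHeis hH hK f g) w
  have hΨu := Heis.commute_map_of_commutator_eq_bot hsup hcomm Ψ hu hv (hΨ v ▸ hfgv)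
  obtain ⟨a, ha⟩ := Abelianization.exists_apply_of_ne_one hf
  obtain ⟨b, hb⟩ := Abelianization.exists_apply_of_ne_one hg
  refine hfgu (hΨ u ▸ Heis.xyHom_eq_one_of_commute ha hb ?_ ?_)
  · simpa [Ψ] using hΨu (amalgam.inl A B H K φ a)
  · simpa [Ψ] using hΨu (amalgam.inr A B H K φ b)

/-- the amalgamated coproduct of nontrivial groups of class at
most 2 and odd prime exponent `p` admits no nontrivial central product
decomposition. -/
theorem stmt_10 (p : ℕ) (hp : p.Prime) (hodd : Odd p)
    (A B : Type) [Group A] [Group B] [Nontrivial A] [Nontrivial B]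
    (hA : (⊤ : Subgroup A).lowerCentralSeries 2 = ⊥) (hB : (⊤ : Subgroup B).lowerCentralSeries 2 = ⊥)
    (hAe : ∀ a : A, a ^ p = 1) (hBe : ∀ b : B, b ^ p = 1)
    (H : Subgroup A) (K : Subgroup B)
    (hH : H ≤ commutator A) (hK : K ≤ commutator B) (φ : H ≃* K) :
    ∀ C D : Subgroup (amalgam A B H K φ),
      C ⊔ D = ⊤ → ⁅C, D⁆ = ⊥ → C ≤ D ∨ D ≤ C :=
  stmt_10_general p hp A B hA hB hAe hBe H K hH hK φ
end

section
/- Let G be a nontrivial group of class at most 2 and odd prime exponent p such that Z(G) = [G,G], and suppose G = CD is a nontrivial central product decomposition with [C,C] ∩ [D,D] nontrivial. Then G is not capable. -/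
/-!
Let `ψ : E → G` be a central extension and `C' D'` the preimages of `C` and `D`.
Since `[C, D] = 1`, the commutator `[C', D']` lies in `ker ψ ≤ Z(E)`, so by the three subgroup
lemma `[C', C']` centralizes `D'`, and likewise `[D', D']` centralizes `C'`. Every preimage of an
element of `[C, C] ∩ [D, D]` therefore centralizes `C' D' = E`, so `[C, C] ∩ [D, D]` lies in the
image of `Z(E)`. For `E / Z(E) ≅ G` that image is trivial.
-/

namespace Subgroup

variable {E G : Type*} [Group E] [Group G] {ψ : E →* G}

theorem commutator_comap_le_center (hker : ψ.ker ≤ center E) {C D : Subgroup G}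
    (hCD : ⁅C, D⁆ = ⊥) : ⁅C.comap ψ, D.comap ψ⁆ ≤ center E := by
  refine le_trans ?_ hker
  rw [← map_eq_bot_iff, map_commutator, ← le_bot_iff, ← hCD]
  exact commutator_mono (map_comap_le ψ C) (map_comap_le ψ D)

theorem comap_commutator_le_centralizer (hψ : Function.Surjective ψ)
    (hker : ψ.ker ≤ center E) {C D : Subgroup G} (hCD : ⁅C, D⁆ = ⊥) :
    ⁅C, C⁆.comap ψ ≤ centralizer (D.comap ψ) := by
  have hC'D' := commutator_comap_le_center hker hCD
  have hC'C'D' : ⁅⁅C.comap ψ, C.comap ψ⁆, D.comap ψ⁆ = ⊥ := by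
    refine commutator_commutator_eq_bot_of_rotate ?_ ?_ <;>
      rw [commutator_eq_bot_iff_le_centralizer]
    · exact hC'D'.trans (center_le_centralizer _)
    · rw [commutator_comm]
      exact hC'D'.trans (center_le_centralizer _)
  rw [← map_comap_eq_self_of_surjective hψ C, ← map_commutator, comap_map_eq]
  exact sup_le (commutator_eq_bot_iff_le_centralizer.mp hC'C'D')
    (hker.trans (center_le_centralizer _))

theorem commutator_inf_commutator_le_map_center (hψ : Function.Surjective ψ)
    (hker : ψ.ker ≤ center E) {C D : Subgroup G} (hCD : C ⊔ D = ⊤) (hcomm : ⁅C, D⁆ = ⊥) :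
    ⁅C, C⁆ ⊓ ⁅D, D⁆ ≤ (center E).map ψ := by
  rw [← map_comap_eq_self_of_surjective hψ (⁅C, C⁆ ⊓ ⁅D, D⁆)]
  refine map_mono ?_
  have hCC := comap_commutator_le_centralizer hψ hker hcomm
  have hDD := comap_commutator_le_centralizer hψ hker ((commutator_comm D C).trans hcomm)
  have hcent : C.comap ψ ⊔ D.comap ψ ≤ centralizer ((⁅C, C⁆ ⊓ ⁅D, D⁆).comap ψ) := by
    rw [comap_inf]
    exact sup_le (le_centralizer_iff.mp (inf_le_right.trans hDD))
      (le_centralizer_iff.mp (inf_le_left.trans hCC))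
  rwa [comap_sup_eq ψ C D hψ, hCD, comap_top, top_le_iff, centralizer_eq_top_iff_subset] at hcent

end Subgroup

theorem commutator_inf_commutator_le_epicenter {G : Type} [Group G] {C D : Subgroup G}
    (hCD : C ⊔ D = ⊤) (hcomm : ⁅C, D⁆ = ⊥) : ⁅C, C⁆ ⊓ ⁅D, D⁆ ≤ epicenter G := by
  simp only [epicenter, le_iInf_iff]
  intro E _ ψ hψ hker
  exact Subgroup.commutator_inf_commutator_le_map_center hψ hker hCD hcomm

theorem IsCapable.epicenter_eq_bot {G : Type} [Group G] (hG : IsCapable G) :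
    epicenter G = ⊥ := by
  obtain ⟨E, _, ⟨φ⟩⟩ := hG
  let ψ : E →* G := (φ : E ⧸ Subgroup.center E →* G).comp (QuotientGroup.mk' _)
  have hker : ψ.ker ≤ Subgroup.center E := by
    rw [MonoidHom.ker_mulEquiv_comp, QuotientGroup.ker_mk']
  have hψ : Function.Surjective ψ := φ.surjective.comp (QuotientGroup.mk'_surjective _)
  refine le_bot_iff.mp ((iInf₂_le E ‹_›).trans ?_)
  refine (iInf₂_le ψ hψ).trans ((iInf_le _ hker).trans ?_)
  rw [← Subgroup.map_map, QuotientGroup.map_mk'_self, Subgroup.map_bot]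

theorem stmt_11_general
    (G : Type) [Group G]
    (C D : Subgroup G) (hCD : C ⊔ D = ⊤) (hcomm : ⁅C, D⁆ = ⊥)
    (hint : ⁅C, C⁆ ⊓ ⁅D, D⁆ ≠ ⊥) :
    ¬ IsCapable G := fun hG =>
  hint (le_bot_iff.mp (hG.epicenter_eq_bot ▸ commutator_inf_commutator_le_epicenter hCD hcomm))

/-- Heineken–Nikolova: a group of class at most 2 and odd prime
exponent `p` with `Z(G) = [G,G]` that has a nontrivial central product
decomposition `G = CD` with `[C,C] ∩ [D,D]` nontrivial is not capable. -/
theorem stmt_11 (p : ℕ) (hp : p.Prime) (hodd : Odd p)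
    (G : Type) [Group G] [Nontrivial G]
    (hG2 : (⊤ : Subgroup G).lowerCentralSeries 2 = ⊥) (hGp : ∀ g : G, g ^ p = 1)
    (hZ : Subgroup.center G = commutator G)
    (C D : Subgroup G) (hCD : C ⊔ D = ⊤) (hcomm : ⁅C, D⁆ = ⊥)
    (hC : ¬ C ≤ D) (hD : ¬ D ≤ C) (hint : ⁅C, C⁆ ⊓ ⁅D, D⁆ ≠ ⊥) :
    ¬ IsCapable G :=
  stmt_11_general G C D hCD hcomm hint
end
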